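/- arXiv:math/0406112 — 6 statements merged into one kernel-verified Lean document; each statement's English description precedes it below -/
import Mathlib

section
/- Let m be an odd positive integer and let r > 0. Then there exist constants a₀ > 0 and c > 0 such that for all real a ≥ a₀ and all real λ, μ with |λ| ≤ r and |μ| ≤ r, one has |p(λ,μ;ia)| ≥ c, where i is the imaginary unit. -/
/-!
`p` is homogeneous of degree `m - 1` in `(λ, μ, z)`, so `p(λ,μ;ia) = a^(m-1) p(λ/a, μ/a; i)`.
At the origin `p(0,0;i) = m (-i)^(m-1)` has modulus `m`, hence by continuity `|p(s,t;i)| > m/2`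
for small `s, t`. For `a ≥ 1` large enough `λ/a, μ/a` are that small, and `a^(m-1) ≥ 1`.
-/

open Finset

/-- The polynomial `p(λ,μ;z) = ∑_{j=0}^{m-1} (λ - z)^{m-1-j} (μ - z)^j`. -/
noncomputable def pker (m : ℕ) (l μ z : ℂ) : ℂ :=
  ∑ j ∈ Finset.range m, (l - z) ^ (m - 1 - j) * (μ - z) ^ j

theorem pker_mul (m : ℕ) (c l μ z : ℂ) :
    pker m (c * l) (c * μ) (c * z) = c ^ (m - 1) * pker m l μ z := by
  rw [pker, pker, mul_sum]
  refine sum_congr rfl fun j hj => ?_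
  rw [← mul_sub, ← mul_sub, mul_pow, mul_pow,
    ← Nat.sub_add_cancel (show j ≤ m - 1 by grind), pow_add, Nat.add_sub_cancel]
  ring

theorem pker_zero_zero (m : ℕ) (z : ℂ) : pker m 0 0 z = m * (-z) ^ (m - 1) := by
  have hterm : ∀ j ∈ range m, (0 - z) ^ (m - 1 - j) * (0 - z) ^ j = (-z) ^ (m - 1) :=
    fun j hj => by rw [zero_sub, ← pow_add, Nat.sub_add_cancel (show j ≤ m - 1 by grind)]
  rw [pker, sum_congr rfl hterm, sum_const, card_range, nsmul_eq_mul]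

theorem norm_pker_zero_zero (m : ℕ) (z : ℂ) : ‖pker m 0 0 z‖ = m * ‖z‖ ^ (m - 1) := by
  simp [pker_zero_zero]

theorem continuous_pker (m : ℕ) (z : ℂ) : Continuous fun q : ℂ × ℂ => pker m q.1 q.2 z :=
  continuous_finsetSum _ fun _ _ => by fun_prop

theorem exists_half_norm_pker_lt (m : ℕ) {z : ℂ} (hz : pker m 0 0 z ≠ 0) :
    ∃ δ > 0, ∀ s t : ℂ, ‖s‖ < δ → ‖t‖ < δ → ‖pker m 0 0 z‖ / 2 < ‖pker m s t z‖ := by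
  have hcont : Continuous fun q : ℂ × ℂ => ‖pker m q.1 q.2 z‖ := (continuous_pker m z).norm
  have hhalf : ‖pker m 0 0 z‖ / 2 < ‖pker m 0 0 z‖ := half_lt_self (norm_pos_iff.2 hz)
  obtain ⟨δ, hδ, h⟩ := Metric.eventually_nhds_iff.1 <|
    (hcont.tendsto ((0 : ℂ), (0 : ℂ))).eventually (lt_mem_nhds hhalf)
  refine ⟨δ, hδ, fun s t hs ht => ?_⟩
  have hst : dist (s, t) ((0 : ℂ), (0 : ℂ)) < δ := by
    rw [Prod.dist_eq, dist_zero_right, dist_zero_right]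
    exact max_lt hs ht
  simpa only using h hst

theorem pker_lower_bound_large_a_general (m : ℕ) (hm : 0 < m) (r : ℝ) :
    ∃ a₀ > 0, ∃ c > 0, ∀ a : ℝ, a₀ ≤ a → ∀ l μ : ℝ, |l| ≤ r → |μ| ≤ r →
      c ≤ ‖pker m (l : ℂ) (μ : ℂ) ((a : ℂ) * Complex.I)‖ := by
  have hI : ‖pker m 0 0 Complex.I‖ = m := by simp [norm_pker_zero_zero]
  obtain ⟨δ, hδ, hnear⟩ := exists_half_norm_pker_lt m (z := Complex.I) <| by
    rw [← norm_ne_zero_iff, hI]; exact_mod_cast hm.ne'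
  refine ⟨max 1 (2 * r / δ), by positivity, m / 2, by positivity, fun a ha l μ hl hμ => ?_⟩
  have ha1 : 1 ≤ a := le_of_max_le_left ha
  have ha0 : 0 < a := zero_lt_one.trans_le ha1
  have hrδ : 2 * r ≤ a * δ := (div_le_iff₀ hδ).1 (le_of_max_le_right ha)
  have hsmall : ∀ x : ℝ, |x| ≤ r → ‖(x / a : ℂ)‖ < δ := fun x hx => by
    rw [norm_div, Complex.norm_real, Complex.norm_real, Real.norm_eq_abs,
      Real.norm_of_nonneg ha0.le, div_lt_iff₀ ha0]
    nlinarith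
  have hscale : pker m l μ (a * Complex.I) =
      (a : ℂ) ^ (m - 1) * pker m (l / a) (μ / a) Complex.I := by
    have ha0' : (a : ℂ) ≠ 0 := by exact_mod_cast ha0.ne'
    rw [← pker_mul, mul_div_cancel₀ _ ha0', mul_div_cancel₀ _ ha0']
  calc (m : ℝ) / 2 = ‖pker m 0 0 Complex.I‖ / 2 := by rw [hI]
    _ ≤ ‖pker m (l / a) (μ / a) Complex.I‖ := (hnear _ _ (hsmall l hl) (hsmall μ hμ)).le
    _ ≤ a ^ (m - 1) * ‖pker m (l / a) (μ / a) Complex.I‖ :=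
      le_mul_of_one_le_left (norm_nonneg _) (one_le_pow₀ ha1)
    _ = ‖pker m l μ (a * Complex.I)‖ := by
      rw [hscale, norm_mul, norm_pow, Complex.norm_real, Real.norm_of_nonneg ha0.le]

/-- First assertion of Lemma 3: for `m` odd and `|λ| ≤ r`, `|μ| ≤ r`,
`|p(λ,μ;ia)| ≥ c > 0` for all sufficiently large `a`. -/
theorem pker_lower_bound_large_a (m : ℕ) (hm : 0 < m) (hodd : Odd m) (r : ℝ) (hr : 0 < r) :
    ∃ a₀ > 0, ∃ c > 0, ∀ a : ℝ, a₀ ≤ a → ∀ l μ : ℝ, |l| ≤ r → |μ| ≤ r →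
      c ≤ ‖pker m (l : ℂ) (μ : ℂ) ((a : ℂ) * Complex.I)‖ :=
  pker_lower_bound_large_a_general m hm r
end

section
/- Let m be an odd positive integer and let r > 0. Then there exist constants a₀ > 0 and c > 0 such that for all real a with 0 < a ≤ a₀ and all real λ, μ with max(|λ|, |μ|) ≥ r, one has |p(λ,μ;ia)| ≥ c·(|λ| + |μ|)^{m-1}, where i is the imaginary unit. -/
/-! At `z = 0` the sum `p(λ,μ;0) = ∑ λ^(m-1-j) μ^j` is real, and for odd `m` it is at least
`((|λ|+|μ|)/2)^(m-1)`: if `λμ ≥ 0` all terms share one sign (after `(λ,μ) ↦ (-λ,-μ)`, harmless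
since `m - 1` is even) and an extreme term already gives `max(|λ|,|μ|)^(m-1)`; if `λμ < 0`, the
identity `p·(μ-λ) = μ^m - λ^m` becomes `p·(|λ|+|μ|) = |λ|^m + |μ|^m`, and convexity of `t ↦ t^m`
finishes. Shifting `z` from `0` to `ia` moves each of the `m` terms by `O(a (|λ|+|μ|)^(m-2))`, which
is at most half of that lower bound once `a ≲ r ≤ |λ|+|μ|`. -/

open Finset

section CommRing

variable {R : Type*} [CommRing R]

def geomSum₂ (n : ℕ) (x y : R) : R :=
  ∑ j ∈ range n, x ^ (n - 1 - j) * y ^ j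

lemma geomSum₂_mul_sub (n : ℕ) (x y : R) : geomSum₂ n x y * (y - x) = y ^ n - x ^ n := by
  rw [← geom_sum₂_mul, geomSum₂]
  exact congrArg (· * (y - x)) (sum_congr rfl fun _ _ => mul_comm _ _)

lemma geomSum₂_neg_neg (n : ℕ) (x y : R) :
    geomSum₂ (n + 1) (-x) (-y) = (-1) ^ n * geomSum₂ (n + 1) x y := by
  rw [geomSum₂, geomSum₂, mul_sum]
  refine sum_congr rfl fun j hj => ?_
  have hjn : n + 1 - 1 - j + j = n := by have := mem_range.mp hj; omega
  have hsign : (-1 : R) ^ (n + 1 - 1 - j) * (-1) ^ j = (-1) ^ n := by rw [← pow_add, hjn]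
  rw [neg_pow x, neg_pow y]
  linear_combination (x ^ (n + 1 - 1 - j) * y ^ j) * hsign

end CommRing

section Normed

variable {R : Type*} [NormedCommRing R] [NormOneClass R] {M δ : ℝ}

-- The factor `M` on the left replaces `M ^ (n - 1)` on the right, which truncates at `n = 0`.
lemma norm_pow_sub_pow_mul_le {x y : R} (hx : ‖x‖ ≤ M) (hy : ‖y‖ ≤ M) (n : ℕ) :
    ‖x ^ n - y ^ n‖ * M ≤ n * M ^ n * ‖x - y‖ := by
  have hM : 0 ≤ M := (norm_nonneg x).trans hx
  induction n with
  | zero => simp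
  | succ n ih =>
    have hsplit : x ^ (n + 1) - y ^ (n + 1) = x ^ n * (x - y) + (x ^ n - y ^ n) * y := by ring
    have hxn : ‖x ^ n‖ ≤ M ^ n := (norm_pow_le x n).trans (by gcongr)
    calc ‖x ^ (n + 1) - y ^ (n + 1)‖ * M
        ≤ ‖x ^ n‖ * ‖x - y‖ * M + ‖x ^ n - y ^ n‖ * M * ‖y‖ := by
          rw [hsplit, mul_right_comm _ M, ← add_mul]
          gcongr
          exact (norm_add_le _ _).trans (add_le_add (norm_mul_le _ _) (norm_mul_le _ _))
      _ ≤ M ^ n * ‖x - y‖ * M + n * M ^ n * ‖x - y‖ * M := by gcongr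
      _ = (n + 1 : ℕ) * M ^ (n + 1) * ‖x - y‖ := by push_cast; ring

lemma norm_pow_mul_pow_sub_mul_le {u v x y : R} (hu : ‖u‖ ≤ M) (hv : ‖v‖ ≤ M) (hx : ‖x‖ ≤ M)
    (hy : ‖y‖ ≤ M) (hux : ‖u - x‖ ≤ δ) (hvy : ‖v - y‖ ≤ δ) (k j : ℕ) :
    ‖u ^ k * v ^ j - x ^ k * y ^ j‖ * M ≤ (k + j : ℕ) * M ^ (k + j) * δ := by
  have hM : 0 ≤ M := (norm_nonneg x).trans hx
  have hsplit : u ^ k * v ^ j - x ^ k * y ^ j =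
      (u ^ k - x ^ k) * v ^ j + x ^ k * (v ^ j - y ^ j) := by ring
  have hvj : ‖v ^ j‖ ≤ M ^ j := (norm_pow_le v j).trans (by gcongr)
  have hxk : ‖x ^ k‖ ≤ M ^ k := (norm_pow_le x k).trans (by gcongr)
  have huxk : ‖u ^ k - x ^ k‖ * M ≤ k * M ^ k * δ :=
    (norm_pow_sub_pow_mul_le hu hx k).trans (by gcongr)
  have hvyj : ‖v ^ j - y ^ j‖ * M ≤ j * M ^ j * δ :=
    (norm_pow_sub_pow_mul_le hv hy j).trans (by gcongr)
  calc ‖u ^ k * v ^ j - x ^ k * y ^ j‖ * M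
      ≤ (‖u ^ k - x ^ k‖ * ‖v ^ j‖ + ‖x ^ k‖ * ‖v ^ j - y ^ j‖) * M := by
        rw [hsplit]
        gcongr
        exact (norm_add_le _ _).trans (add_le_add (norm_mul_le _ _) (norm_mul_le _ _))
    _ = ‖u ^ k - x ^ k‖ * M * ‖v ^ j‖ + ‖x ^ k‖ * (‖v ^ j - y ^ j‖ * M) := by ring
    _ ≤ k * M ^ k * δ * M ^ j + M ^ k * (j * M ^ j * δ) := by
        have hδ : 0 ≤ δ := (norm_nonneg _).trans hux
        gcongr
    _ = (k + j : ℕ) * M ^ (k + j) * δ := by push_cast; ring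

lemma norm_geomSum₂_sub_mul_le {u v x y : R} (hu : ‖u‖ ≤ M) (hv : ‖v‖ ≤ M) (hx : ‖x‖ ≤ M)
    (hy : ‖y‖ ≤ M) (hux : ‖u - x‖ ≤ δ) (hvy : ‖v - y‖ ≤ δ) (n : ℕ) :
    ‖geomSum₂ (n + 1) u v - geomSum₂ (n + 1) x y‖ * M ≤ (n + 1) * n * M ^ n * δ := by
  have hM : 0 ≤ M := (norm_nonneg x).trans hx
  rw [geomSum₂, geomSum₂, ← sum_sub_distrib]
  calc ‖∑ j ∈ range (n + 1), (u ^ (n + 1 - 1 - j) * v ^ j - x ^ (n + 1 - 1 - j) * y ^ j)‖ * M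
      ≤ ∑ j ∈ range (n + 1), ‖u ^ (n + 1 - 1 - j) * v ^ j - x ^ (n + 1 - 1 - j) * y ^ j‖ * M := by
        rw [← sum_mul]
        gcongr
        exact norm_sum_le _ _
    _ ≤ ∑ _j ∈ range (n + 1), n * M ^ n * δ := by
        refine sum_le_sum fun j hj => ?_
        have hjn : n + 1 - 1 - j + j = n := by have := mem_range.mp hj; omega
        simpa only [hjn] using norm_pow_mul_pow_sub_mul_le hu hv hx hy hux hvy (n + 1 - 1 - j) j
    _ = (n + 1) * n * M ^ n * δ := by
        rw [sum_const, card_range, nsmul_eq_mul]; push_cast; ring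

end Normed

lemma pow_max_le_geomSum₂ {x y : ℝ} (hx : 0 ≤ x) (hy : 0 ≤ y) (n : ℕ) :
    max x y ^ n ≤ geomSum₂ (n + 1) x y := by
  have hterm : ∀ j ∈ range (n + 1), 0 ≤ x ^ (n + 1 - 1 - j) * y ^ j := fun _ _ => by positivity
  unfold geomSum₂
  rcases le_total x y with hxy | hyx
  · rw [max_eq_right hxy]
    simpa using single_le_sum hterm (self_mem_range_succ n)
  · rw [max_eq_left hyx]
    simpa using single_le_sum hterm (mem_range.mpr n.succ_pos)

lemma half_add_pow_le_geomSum₂_of_mul_neg {n : ℕ} (hn : Even n) {x y : ℝ} (hxy : x * y < 0) :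
    ((|x| + |y|) / 2) ^ n ≤ geomSum₂ (n + 1) x y := by
  have hodd : Odd (n + 1) := hn.add_one
  have key : geomSum₂ (n + 1) x y * (|x| + |y|) = |x| ^ (n + 1) + |y| ^ (n + 1) := by
    have h := geomSum₂_mul_sub (n + 1) x y
    rcases mul_neg_iff.mp hxy with ⟨hx, hy⟩ | ⟨hx, hy⟩
    · rw [abs_of_pos hx, abs_of_neg hy, hodd.neg_pow]
      linear_combination -h
    · rw [abs_of_neg hx, abs_of_pos hy, hodd.neg_pow]
      linear_combination h
  have hs : 0 < |x| + |y| := by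
    have := abs_pos.mpr (left_ne_zero_of_mul hxy.ne)
    positivity
  refine le_of_mul_le_mul_right ?_ hs
  rw [key]
  calc ((|x| + |y|) / 2) ^ n * (|x| + |y|) = (|x| + |y|) ^ (n + 1) / 2 ^ n := by
        rw [div_pow, pow_succ]; field_simp
    _ ≤ |x| ^ (n + 1) + |y| ^ (n + 1) := by
      rw [div_le_iff₀ (by positivity), mul_comm]
      simpa using add_pow_le (abs_nonneg x) (abs_nonneg y) (n + 1)

lemma half_add_pow_le_geomSum₂ {n : ℕ} (hn : Even n) (x y : ℝ) :
    ((|x| + |y|) / 2) ^ n ≤ geomSum₂ (n + 1) x y := by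
  have of_nonneg : ∀ {x y : ℝ}, 0 ≤ x → 0 ≤ y → ((|x| + |y|) / 2) ^ n ≤ geomSum₂ (n + 1) x y := by
    intro x y hx hy
    rw [abs_of_nonneg hx, abs_of_nonneg hy]
    refine (pow_le_pow_left₀ (by positivity) ?_ n).trans (pow_max_le_geomSum₂ hx hy n)
    linarith [le_max_left x y, le_max_right x y]
  rcases lt_or_ge (x * y) 0 with hxy | hxy
  · exact half_add_pow_le_geomSum₂_of_mul_neg hn hxy
  rcases mul_nonneg_iff.mp hxy with ⟨hx, hy⟩ | ⟨hx, hy⟩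
  · exact of_nonneg hx hy
  · have := of_nonneg (neg_nonneg.mpr hx) (neg_nonneg.mpr hy)
    rwa [abs_neg, abs_neg, geomSum₂_neg_neg, hn.neg_one_pow, one_mul] at this

open Complex

lemma pker_eq_geomSum₂ (m : ℕ) (l μ z : ℂ) : pker m l μ z = geomSum₂ m (l - z) (μ - z) := rfl

lemma norm_pker_sub_geomSum₂_le {n : ℕ} {a l μ : ℝ} (ha : 0 < a)
    (hsmall : ((n : ℝ) + 1) ^ 2 * 4 ^ n * a ≤ |l| + |μ|) :
    ‖pker (n + 1) l μ (a * I) - (geomSum₂ (n + 1) l μ : ℝ)‖ ≤ ((|l| + |μ|) / 2) ^ n / 2 := by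
  set s := |l| + |μ|
  have hs : 0 < s := lt_of_lt_of_le (by positivity) hsmall
  have has : a ≤ s := by
    refine le_trans (le_mul_of_one_le_left ha.le ?_) hsmall
    exact one_le_mul_of_one_le_of_one_le (by nlinarith [n.cast_nonneg (α := ℝ)])
      (one_le_pow₀ (by norm_num))
  have hnorm : ‖(a : ℂ) * I‖ = a := by simp [abs_of_pos ha]
  have hl : ‖(l : ℂ)‖ ≤ 2 * s := by
    rw [norm_real, Real.norm_eq_abs]; linarith [abs_nonneg μ]
  have hμ : ‖(μ : ℂ)‖ ≤ 2 * s := by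
    rw [norm_real, Real.norm_eq_abs]; linarith [abs_nonneg l]
  have hl' : ‖(l : ℂ) - a * I‖ ≤ 2 * s := (norm_sub_le _ _).trans <| by
    rw [hnorm, norm_real, Real.norm_eq_abs]; linarith [abs_nonneg μ]
  have hμ' : ‖(μ : ℂ) - a * I‖ ≤ 2 * s := (norm_sub_le _ _).trans <| by
    rw [hnorm, norm_real, Real.norm_eq_abs]; linarith [abs_nonneg l]
  have hshift : ∀ t : ℂ, ‖t - a * I - t‖ ≤ a := fun t => by rw [sub_sub_cancel_left, norm_neg, hnorm]
  have hE := norm_geomSum₂_sub_mul_le hl' hμ' hl hμ (hshift l) (hshift μ) n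
  have hcast : ((geomSum₂ (n + 1) l μ : ℝ) : ℂ) = geomSum₂ (n + 1) (l : ℂ) μ := by
    simp [geomSum₂]
  rw [pker_eq_geomSum₂, hcast]
  set E := ‖geomSum₂ (n + 1) ((l : ℂ) - a * I) (μ - a * I) - geomSum₂ (n + 1) (l : ℂ) μ‖
  have h2s : (2 * s) ^ n = 4 ^ n * (s / 2) ^ n := by rw [← mul_pow]; ring_nf
  have hEs : s * (E * 2) ≤ s * (s / 2) ^ n :=
    calc s * (E * 2) = E * (2 * s) := by ring
      _ ≤ (n + 1) * n * (2 * s) ^ n * a := hE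
      _ = (n + 1) * n * 4 ^ n * a * (s / 2) ^ n := by rw [h2s]; ring
      _ ≤ (n + 1) ^ 2 * 4 ^ n * a * (s / 2) ^ n := by gcongr; nlinarith
      _ ≤ s * (s / 2) ^ n := by gcongr
  rw [le_div_iff₀ two_pos]
  exact le_of_mul_le_mul_left hEs hs

theorem pker_lower_bound_small_a_general (m : ℕ) (hodd : Odd m) (r : ℝ) (hr : 0 < r) :
    ∃ a₀ > 0, ∃ c > 0, ∀ a : ℝ, 0 < a → a ≤ a₀ → ∀ l μ : ℝ, r ≤ max |l| |μ| →
      c * (|l| + |μ|) ^ (m - 1) ≤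
        ‖pker m (l : ℂ) (μ : ℂ) ((a : ℂ) * Complex.I)‖ := by
  obtain ⟨k, rfl⟩ := hodd
  refine ⟨r / (((2 * k : ℕ) + 1) ^ 2 * 4 ^ (2 * k)), by positivity, (1 / 2) ^ (2 * k + 1),
    by positivity, fun a ha ha₀ l μ hlμ => ?_⟩
  have hrs : r ≤ |l| + |μ| :=
    hlμ.trans (max_le (le_add_of_nonneg_right (abs_nonneg μ)) (le_add_of_nonneg_left (abs_nonneg l)))
  have hsmall : ((2 * k : ℕ) + 1 : ℝ) ^ 2 * 4 ^ (2 * k) * a ≤ |l| + |μ| := by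
    rw [le_div_iff₀ (by positivity)] at ha₀
    linarith
  have hE := norm_pker_sub_geomSum₂_le ha hsmall
  have hq := half_add_pow_le_geomSum₂ (even_two_mul k) l μ
  have hp := norm_sub_norm_le ((geomSum₂ (2 * k + 1) l μ : ℝ) : ℂ) (pker (2 * k + 1) l μ (a * I))
  rw [norm_sub_rev, norm_real, Real.norm_eq_abs] at hp
  calc (1 / 2) ^ (2 * k + 1) * (|l| + |μ|) ^ (2 * k + 1 - 1) = ((|l| + |μ|) / 2) ^ (2 * k) / 2 := by
        rw [Nat.add_sub_cancel, div_pow, div_pow]; field_simp; ring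
    _ ≤ _ := by linarith [le_abs_self (geomSum₂ (2 * k + 1) l μ)]

/-- Second assertion of Lemma 3: for `m` odd and `max(|λ|,|μ|) ≥ r`,
`|p(λ,μ;ia)| ≥ c (|λ|+|μ|)^{m-1}` for all sufficiently small `a > 0`. -/
theorem pker_lower_bound_small_a (m : ℕ) (hm : 0 < m) (hodd : Odd m) (r : ℝ) (hr : 0 < r) :
    ∃ a₀ > 0, ∃ c > 0, ∀ a : ℝ, 0 < a → a ≤ a₀ → ∀ l μ : ℝ, r ≤ max |l| |μ| →
      c * (|l| + |μ|) ^ (m - 1) ≤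
        ‖pker m (l : ℂ) (μ : ℂ) ((a : ℂ) * Complex.I)‖ :=
  pker_lower_bound_small_a_general m hodd r hr
end

section
/- Let m be a positive integer, let a > 0, let 0 < r < R, let M ≥ 0, and let f : ℝ → ℂ be a function with |f| ≤ M whose support is contained in [-r, r]. Fix a real μ with |μ| ≤ r and define K(λ) = (f(λ) - f(μ)) / ((λ - ia)^{-m} - (μ - ia)^{-m}) for real λ with |λ| ≥ R. Then there exists a constant C (depending only on m, a, r, R, M) such that K is differentiable at every real λ with |λ| > R and |K′(λ)| ≤ C·(1 + |λ|)^{-m-1}. -/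
/-!
For `|λ| > R > r` the function `f` vanishes near `λ`, so there `K = -f(μ) / (g(λ) - g(μ))` with
`g(t) = (t - ia)^{-m}`, and `K'(λ) = f(μ) g'(λ) / (g(λ) - g(μ))²`. Since `|g(t)| = (t² + a²)^{-m/2}`
strictly decreases in `|t|`, the denominator is at least `|g(r)| - |g(R)| > 0`, while
`|g'(λ)| = m |λ - ia|^{-m-1} ≤ m |λ|^{-m-1} ≤ m (1 + 1/R)^{m+1} (1 + |λ|)^{-m-1}`.
-/

open Complex Filter Topology

lemma zpow_le_zpow_left_of_nonpos {x y : ℝ} {n : ℤ} (hx : 0 < x) (hxy : x ≤ y) (hn : n ≤ 0) :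
    y ^ n ≤ x ^ n := by
  simpa only [Real.rpow_intCast] using Real.rpow_le_rpow_of_nonpos hx hxy (Int.cast_nonpos.2 hn)

lemma zpow_lt_zpow_left_of_neg {x y : ℝ} {n : ℤ} (hx : 0 < x) (hxy : x < y) (hn : n < 0) :
    y ^ n < x ^ n := by
  simpa only [Real.rpow_intCast] using Real.rpow_lt_rpow_of_neg hx hxy (Int.cast_lt_zero.2 hn)

lemma Real.rpow_neg_le_mul_one_add_rpow_neg {R x p : ℝ} (hR : 0 < R) (hx : R ≤ x) (hp : 0 ≤ p) :
    x ^ (-p) ≤ (1 + R⁻¹) ^ p * (1 + x) ^ (-p) := by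
  have hx0 : 0 < x := hR.trans_le hx
  have h : 1 + x ≤ (1 + R⁻¹) * x := by
    have : 1 ≤ R⁻¹ * x := by rwa [← div_eq_inv_mul, one_le_div hR]
    linarith
  rw [Real.rpow_neg hx0.le, Real.rpow_neg (by positivity), ← div_eq_mul_inv,
    le_div_iff₀ (by positivity), ← div_eq_inv_mul, div_le_iff₀ (by positivity),
    ← Real.mul_rpow (by positivity) hx0.le]
  gcongr

lemma eventuallyEq_zero_of_support_subset_Icc {E : Type*} [Zero E] {f : ℝ → E} {r l : ℝ}
    (hf : Function.support f ⊆ Set.Icc (-r) r) (hl : r < |l|) : f =ᶠ[𝓝 l] 0 := by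
  refine notMem_tsupport_iff_eventuallyEq.1 fun hmem => ?_
  have := closure_minimal hf isClosed_Icc hmem
  exact hl.not_ge (abs_le.2 this)

lemma HasDerivAt.div_sub_of_eventuallyEq_zero {𝕜 𝕜' : Type*} [NontriviallyNormedField 𝕜]
    [NontriviallyNormedField 𝕜'] [NormedAlgebra 𝕜 𝕜'] {f g : 𝕜 → 𝕜'} {g' c d : 𝕜'} {x : 𝕜}
    (hg : HasDerivAt g g' x) (hf : f =ᶠ[𝓝 x] 0) (hgd : g x ≠ d) :
    HasDerivAt (fun t => (f t - c) / (g t - d)) (c * g' / (g x - d) ^ 2) x := by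
  have h := (hasDerivAt_const x (0 - c)).fun_div (hg.sub_const d) (sub_ne_zero.2 hgd)
  rw [show (0 * (g x - d) - (0 - c) * g') = c * g' by ring] at h
  exact h.congr_of_eventuallyEq (hf.mono fun t ht => by simp [ht])

namespace Complex

lemma hasDerivAt_ofReal_sub_zpow (c : ℂ) (n : ℤ) {t : ℝ} (h : (t : ℂ) ≠ c) :
    HasDerivAt (fun s : ℝ => ((s : ℂ) - c) ^ n) (n * ((t : ℂ) - c) ^ (n - 1)) t := by
  have h := (hasDerivAt_zpow n _ (.inl (sub_ne_zero.2 h))).comp (t : ℂ)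
    ((hasDerivAt_id _).sub_const c)
  simpa using h.comp_ofReal

lemma abs_le_norm_ofReal_sub_mul_I (t a : ℝ) : |t| ≤ ‖(t : ℂ) - a * I‖ := by
  simpa using abs_re_le_norm ((t : ℂ) - a * I)

lemma sq_norm_ofReal_sub_mul_I (t a : ℝ) : ‖(t : ℂ) - a * I‖ ^ 2 = t ^ 2 + a ^ 2 := by
  simp [Complex.sq_norm, normSq_apply]; ring

variable {a : ℝ}

lemma ofReal_ne_mul_I (ha : a ≠ 0) (t : ℝ) : (t : ℂ) ≠ a * I := fun h =>
  ha (by simpa using (congrArg Complex.im h).symm)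

lemma norm_ofReal_sub_mul_I_le {s t : ℝ} (h : |s| ≤ |t|) :
    ‖(s : ℂ) - a * I‖ ≤ ‖(t : ℂ) - a * I‖ := by
  rw [← sq_le_sq₀ (norm_nonneg _) (norm_nonneg _), sq_norm_ofReal_sub_mul_I,
    sq_norm_ofReal_sub_mul_I]
  nlinarith [sq_le_sq.2 h]

lemma norm_ofReal_sub_mul_I_lt {s t : ℝ} (h : |s| < |t|) :
    ‖(s : ℂ) - a * I‖ < ‖(t : ℂ) - a * I‖ := by
  rw [← sq_lt_sq₀ (norm_nonneg _) (norm_nonneg _), sq_norm_ofReal_sub_mul_I,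
    sq_norm_ofReal_sub_mul_I]
  nlinarith [sq_lt_sq.2 h]

variable {n : ℤ}

lemma norm_ofReal_sub_mul_I_zpow_le (ha : a ≠ 0) (hn : n ≤ 0) {s t : ℝ} (h : |s| ≤ |t|) :
    ‖((t : ℂ) - a * I) ^ n‖ ≤ ‖((s : ℂ) - a * I) ^ n‖ := by
  rw [norm_zpow, norm_zpow]
  exact zpow_le_zpow_left_of_nonpos (norm_pos_iff.2 (sub_ne_zero.2 (ofReal_ne_mul_I ha s)))
    (norm_ofReal_sub_mul_I_le h) hn

lemma norm_ofReal_sub_mul_I_zpow_lt (ha : a ≠ 0) (hn : n < 0) {s t : ℝ} (h : |s| < |t|) :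
    ‖((t : ℂ) - a * I) ^ n‖ < ‖((s : ℂ) - a * I) ^ n‖ := by
  rw [norm_zpow, norm_zpow]
  exact zpow_lt_zpow_left_of_neg (norm_pos_iff.2 (sub_ne_zero.2 (ofReal_ne_mul_I ha s)))
    (norm_ofReal_sub_mul_I_lt h) hn

lemma norm_ofReal_sub_mul_I_zpow_le_abs_zpow (hn : n ≤ 0) {t : ℝ} (ht : t ≠ 0) :
    ‖((t : ℂ) - a * I) ^ n‖ ≤ |t| ^ n := by
  rw [norm_zpow]
  exact zpow_le_zpow_left_of_nonpos (abs_pos.2 ht) (abs_le_norm_ofReal_sub_mul_I t a) hn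

lemma norm_sub_norm_le_norm_ofReal_sub_mul_I_zpow_sub (ha : a ≠ 0) (hn : n ≤ 0) {μ r R t : ℝ}
    (hμ : |μ| ≤ |r|) (ht : |R| ≤ |t|) :
    ‖((r : ℂ) - a * I) ^ n‖ - ‖((R : ℂ) - a * I) ^ n‖ ≤
      ‖((t : ℂ) - a * I) ^ n - ((μ : ℂ) - a * I) ^ n‖ := by
  have hr := norm_ofReal_sub_mul_I_zpow_le ha hn hμ
  have hR := norm_ofReal_sub_mul_I_zpow_le ha hn ht
  have := norm_sub_norm_le (((μ : ℂ) - a * I) ^ n) (((t : ℂ) - a * I) ^ n)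
  rw [norm_sub_rev] at this
  linarith

end Complex

theorem kernel_derivative_bound_general (m : ℕ) (hm : 0 < m) (a : ℝ) (ha : 0 < a)
    (r R : ℝ) (hrR : r < R) (M : ℝ) (f : ℝ → ℂ)
    (hbdd : ∀ x : ℝ, ‖f x‖ ≤ M)
    (hsupp : Function.support f ⊆ Set.Icc (-r) r)
    (μ : ℝ) (hμ : |μ| ≤ r) :
    ∃ C : ℝ, ∀ l : ℝ, R < |l| →
      DifferentiableAt ℝ
        (fun t : ℝ => (f t - f μ) /
          (((t : ℂ) - (a : ℂ) * Complex.I) ^ (-(m : ℤ)) -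
            ((μ : ℂ) - (a : ℂ) * Complex.I) ^ (-(m : ℤ)))) l ∧
      ‖deriv
        (fun t : ℝ => (f t - f μ) /
          (((t : ℂ) - (a : ℂ) * Complex.I) ^ (-(m : ℤ)) -
            ((μ : ℂ) - (a : ℂ) * Complex.I) ^ (-(m : ℤ)))) l‖ ≤
        C * (1 + |l|) ^ (-(m : ℝ) - 1) := by
  have hr : 0 ≤ r := (abs_nonneg μ).trans hμ
  have hR : 0 < R := hr.trans_lt hrR
  have hn : -(m : ℤ) < 0 := by omega
  set δ := ‖((r : ℂ) - a * I) ^ (-(m : ℤ))‖ - ‖((R : ℂ) - a * I) ^ (-(m : ℤ))‖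
  have hδ : 0 < δ := sub_pos.2 <| norm_ofReal_sub_mul_I_zpow_lt ha.ne' hn <| by
    rwa [abs_of_nonneg hr, abs_of_pos hR]
  refine ⟨M * m * (1 + R⁻¹) ^ ((m : ℝ) + 1) / δ ^ 2, fun l hl => ?_⟩
  have hl0 : l ≠ 0 := abs_pos.1 (hR.trans hl)
  have hden : δ ≤ ‖((l : ℂ) - a * I) ^ (-(m : ℤ)) - ((μ : ℂ) - a * I) ^ (-(m : ℤ))‖ :=
    norm_sub_norm_le_norm_ofReal_sub_mul_I_zpow_sub ha.ne' hn.le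
      (by rwa [abs_of_nonneg hr]) (by rw [abs_of_pos hR]; exact hl.le)
  have hK := HasDerivAt.div_sub_of_eventuallyEq_zero (c := f μ)
    (hasDerivAt_ofReal_sub_zpow _ _ (ofReal_ne_mul_I ha.ne' l))
    (eventuallyEq_zero_of_support_subset_Icc hsupp (hrR.trans hl))
    (sub_ne_zero.1 (norm_pos_iff.1 (hδ.trans_le hden)))
  refine ⟨hK.differentiableAt, ?_⟩
  rw [hK.deriv, norm_div, norm_mul, norm_mul, norm_pow]
  have hG : ‖((l : ℂ) - a * I) ^ (-(m : ℤ) - 1)‖ ≤ |l| ^ (-(m : ℝ) - 1) := by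
    have := norm_ofReal_sub_mul_I_zpow_le_abs_zpow (a := a) (n := -(m : ℤ) - 1) (by omega) hl0
    rw [← Real.rpow_intCast] at this
    exact_mod_cast this
  have hdecay := Real.rpow_neg_le_mul_one_add_rpow_neg hR hl.le (p := (m : ℝ) + 1) (by positivity)
  rw [neg_add'] at hdecay
  calc ‖f μ‖ * (‖((-(m : ℤ) : ℤ) : ℂ)‖ * ‖((l : ℂ) - a * I) ^ (-(m : ℤ) - 1)‖) /
        ‖((l : ℂ) - a * I) ^ (-(m : ℤ)) - ((μ : ℂ) - a * I) ^ (-(m : ℤ))‖ ^ 2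
      ≤ M * (m * ((1 + R⁻¹) ^ ((m : ℝ) + 1) * (1 + |l|) ^ (-(m : ℝ) - 1))) / δ ^ 2 := by
        rw [show ‖((-(m : ℤ) : ℤ) : ℂ)‖ = m by simp]
        have hM : 0 ≤ M := (norm_nonneg _).trans (hbdd μ)
        gcongr
        · exact hbdd μ
        · exact hG.trans hdecay
    _ = _ := by ring

/-- Estimate (3.20) in the region `|μ| ≤ r`, `|λ| ≥ R > r`: the λ-derivative of the
kernel `K(λ) = (f(λ)-f(μ))/((λ-ia)^{-m} - (μ-ia)^{-m})` is `O((1+|λ|)^{-m-1})`. -/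
theorem kernel_derivative_bound (m : ℕ) (hm : 0 < m) (a : ℝ) (ha : 0 < a)
    (r R : ℝ) (hr : 0 < r) (hrR : r < R) (M : ℝ) (hM : 0 ≤ M) (f : ℝ → ℂ)
    (hbdd : ∀ x : ℝ, ‖f x‖ ≤ M)
    (hsupp : Function.support f ⊆ Set.Icc (-r) r)
    (μ : ℝ) (hμ : |μ| ≤ r) :
    ∃ C : ℝ, ∀ l : ℝ, R < |l| →
      DifferentiableAt ℝ
        (fun t : ℝ => (f t - f μ) /
          (((t : ℂ) - (a : ℂ) * Complex.I) ^ (-(m : ℤ)) -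
            ((μ : ℂ) - (a : ℂ) * Complex.I) ^ (-(m : ℤ)))) l ∧
      ‖deriv
        (fun t : ℝ => (f t - f μ) /
          (((t : ℂ) - (a : ℂ) * Complex.I) ^ (-(m : ℤ)) -
            ((μ : ℂ) - (a : ℂ) * Complex.I) ^ (-(m : ℤ)))) l‖ ≤
        C * (1 + |l|) ^ (-(m : ℝ) - 1) :=
  kernel_derivative_bound_general m hm a ha r R hrR M f hbdd hsupp μ hμ
end

section
/- Let m be an odd positive integer and let r > 0. Then there exists a₀ > 0 such that for every real a with 0 < a ≤ a₀ there exists a constant C with the following property: for all real λ, μ with |λ| ≥ 2r and |μ| ≥ 2r, the function λ ↦ p(λ,μ;0)/p(λ,μ;ia) is well-defined and differentiable at λ, and |d/dλ ( p(λ,μ;0)/p(λ,μ;ia) )| ≤ C·(|λ| + |μ|)^{-2}. -/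
/-!
The ratio `p(λ,μ;0) / p(λ,μ;z)` is homogeneous of degree `0` in `(λ,μ,z)`, so rescaling by
`s = max |λ| |μ|` moves `(λ,μ)` to the unit sphere, replaces `z = ia` by `z / s` of size `a / s`,
and costs one factor `1 / s` in the `λ`-derivative. On the sphere the derivative is `N / p²` by the
quotient rule, where the numerator `N` is a polynomial vanishing at `z = 0`, hence `O(|z|)` by a
Lipschitz bound on a compact ball. For odd `m`, `p(λ,μ;0)` has no real zero off the origin, as
`(μ - λ) p(λ,μ;0) = μ^m - λ^m` and `p(λ,λ;0) = m λ^(m-1)`; so by compactness `|p|` stays bounded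
below near the sphere for small `z`.
-/

open Finset

open Metric

noncomputable def pkerDeriv (m : ℕ) (l μ z : ℂ) : ℂ :=
  ∑ j ∈ range m, ((m - 1 - j : ℕ) : ℂ) * (l - z) ^ (m - 1 - j - 1) * (μ - z) ^ j

noncomputable def pkerRatioNumer (m : ℕ) (l μ z : ℂ) : ℂ :=
  pkerDeriv m l μ 0 * pker m l μ z - pker m l μ 0 * pkerDeriv m l μ z

lemma hasDerivAt_pker (m : ℕ) (l μ z : ℂ) :
    HasDerivAt (fun w => pker m w μ z) (pkerDeriv m l μ z) l := by
  unfold pker pkerDeriv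
  refine HasDerivAt.fun_sum fun j _ => ?_
  simpa using (((hasDerivAt_id l).sub_const z).pow (m - 1 - j)).mul_const ((μ - z) ^ j)

lemma hasDerivAt_pker_ratio {m : ℕ} {l μ z : ℂ} (h : pker m l μ z ≠ 0) :
    HasDerivAt (fun w => pker m w μ 0 / pker m w μ z)
      (pkerRatioNumer m l μ z / pker m l μ z ^ 2) l :=
  (hasDerivAt_pker m l μ 0).div (hasDerivAt_pker m l μ z) h

lemma pkerRatioNumer_zero (m : ℕ) (l μ : ℂ) : pkerRatioNumer m l μ 0 = 0 := by
  rw [pkerRatioNumer, mul_comm, sub_self]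

lemma pker_const_mul (m : ℕ) (σ l μ z : ℂ) :
    pker m (σ * l) (σ * μ) (σ * z) = σ ^ (m - 1) * pker m l μ z := by
  rw [pker, pker, mul_sum]
  refine sum_congr rfl fun j hj => ?_
  rw [← mul_sub, ← mul_sub, mul_pow, mul_pow, mul_mul_mul_comm, ← pow_add,
    Nat.sub_add_cancel (Nat.le_sub_one_of_lt (mem_range.mp hj))]

lemma pker_eq_pow_mul_pker_div (m : ℕ) {s : ℂ} (hs : s ≠ 0) (l μ z : ℂ) :
    pker m l μ z = s ^ (m - 1) * pker m (l / s) (μ / s) (z / s) := by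
  rw [← pker_const_mul, mul_div_cancel₀ _ hs, mul_div_cancel₀ _ hs, mul_div_cancel₀ _ hs]

lemma hasDerivAt_pker_ratio_ofReal {m : ℕ} {l μ : ℝ} {z s : ℂ} (hs : s ≠ 0)
    (h : pker m (l / s) (μ / s) (z / s) ≠ 0) :
    HasDerivAt (fun t : ℝ => pker m t μ 0 / pker m t μ z)
      (pkerRatioNumer m (l / s) (μ / s) (z / s) / pker m (l / s) (μ / s) (z / s) ^ 2 / s) l := by
  have hscale : (fun t : ℝ => pker m t μ 0 / pker m t μ z) =
      fun t : ℝ => pker m (t / s) (μ / s) 0 / pker m (t / s) (μ / s) (z / s) := by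
    funext t
    rw [pker_eq_pow_mul_pker_div m hs, pker_eq_pow_mul_pker_div m hs (t : ℂ), zero_div,
      mul_div_mul_left _ _ (pow_ne_zero _ hs)]
  rw [hscale]
  exact (((hasDerivAt_pker_ratio h).comp (l : ℂ) ((hasDerivAt_id _).div_const s)).comp_ofReal
    ).congr_deriv (div_eq_mul_one_div _ _).symm

lemma pker_ofReal_ne_zero {m : ℕ} (hodd : Odd m) {x y : ℝ} (hxy : (x, y) ≠ 0) :
    pker m x y 0 ≠ 0 := by
  have hsum : pker m x y 0 = ((∑ j ∈ range m, y ^ j * x ^ (m - 1 - j) : ℝ) : ℂ) := by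
    simp only [pker, sub_zero]
    push_cast
    exact sum_congr rfl fun j _ => mul_comm _ _
  rw [hsum, Complex.ofReal_ne_zero]
  rcases eq_or_ne y x with rfl | hne
  · rw [geom_sum₂_self]
    have hy : y ≠ 0 := by rintro rfl; exact hxy rfl
    exact mul_ne_zero (Nat.cast_ne_zero.mpr hodd.pos.ne') (pow_ne_zero _ hy)
  · intro h0
    have := geom_sum₂_mul y x m
    rw [h0, zero_mul, eq_comm, sub_eq_zero, hodd.pow_inj] at this
    exact hne this

lemma exists_pos_le_norm_pker_on_sphere {m : ℕ} (hodd : Odd m) :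
    ∃ c > 0, ∀ v ∈ sphere (0 : ℝ × ℝ) 1, c ≤ ‖pker m v.1 v.2 0‖ := by
  have hcont : Continuous fun v : ℝ × ℝ => ‖pker m v.1 v.2 0‖ := by
    unfold pker; fun_prop
  obtain ⟨v₀, hv₀, hmin⟩ := (isCompact_sphere (0 : ℝ × ℝ) 1).exists_isMinOn
    (NormedSpace.sphere_nonempty.mpr zero_le_one) hcont.continuousOn
  exact ⟨_, norm_pos_iff.mpr (pker_ofReal_ne_zero hodd (ne_of_mem_sphere hv₀ one_ne_zero)),
    fun v hv => hmin hv⟩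

lemma ContDiff.exists_norm_sub_le_mul_norm_snd {E F G : Type*} [NormedAddCommGroup E]
    [NormedSpace ℝ E] [ProperSpace E] [NormedAddCommGroup F] [NormedSpace ℝ F] [ProperSpace F]
    [NormedAddCommGroup G] [NormedSpace ℝ G] {f : E × F → G} (hf : ContDiff ℝ 1 f) (R : ℝ) :
    ∃ L ≥ 0, ∀ u w, ‖u‖ ≤ R → ‖w‖ ≤ R → ‖f (u, w) - f (u, 0)‖ ≤ L * ‖w‖ := by
  obtain ⟨K, hK⟩ := hf.contDiffOn.exists_lipschitzOnWith one_ne_zero (convex_closedBall 0 R)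
    (isCompact_closedBall 0 R)
  refine ⟨K, K.2, fun u w hu hw => ?_⟩
  have hR : 0 ≤ R := (norm_nonneg u).trans hu
  have hmem : ∀ w' : F, ‖w'‖ ≤ R → (u, w') ∈ closedBall (0 : E × F) R := fun w' hw' => by
    simpa [Prod.norm_def] using And.intro hu hw'
  simpa [Prod.norm_def] using hK.norm_sub_le (hmem w hw) (hmem 0 (by simpa using hR))

lemma exists_pos_le_norm_pker_near_sphere {m : ℕ} (hodd : Odd m) :
    ∃ c > 0, ∃ δ > 0, ∀ v ∈ sphere (0 : ℝ × ℝ) 1, ∀ w : ℂ, ‖w‖ ≤ δ →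
      c ≤ ‖pker m v.1 v.2 w‖ := by
  obtain ⟨c, hc, hsphere⟩ := exists_pos_le_norm_pker_on_sphere hodd
  obtain ⟨L, hL, hlip⟩ := ContDiff.exists_norm_sub_le_mul_norm_snd
    (f := fun p : (ℂ × ℂ) × ℂ => pker m p.1.1 p.1.2 p.2) (by unfold pker; fun_prop) 1
  refine ⟨c / 2, half_pos hc, min 1 (c / (2 * (L + 1))), by positivity, fun v hv w hw => ?_⟩
  have hv' : ‖((v.1 : ℂ), (v.2 : ℂ))‖ ≤ 1 := by
    simpa [Prod.norm_def] using (mem_sphere_zero_iff_norm.mp hv).le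
  have hperturb := hlip _ w hv' (hw.trans (min_le_left _ _))
  have hsmall : L * ‖w‖ ≤ c / 2 := calc
    L * ‖w‖ ≤ (L + 1) * (c / (2 * (L + 1))) := by
      gcongr
      · linarith
      · exact hw.trans (min_le_right _ _)
    _ = c / 2 := by field_simp
  have := norm_sub_norm_le (pker m v.1 v.2 0) (pker m v.1 v.2 w)
  rw [norm_sub_rev] at this
  linarith [hsphere v hv]

lemma exists_norm_pkerRatioNumer_le (m : ℕ) :
    ∃ L ≥ 0, ∀ v ∈ sphere (0 : ℝ × ℝ) 1, ∀ w : ℂ, ‖w‖ ≤ 1 →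
      ‖pkerRatioNumer m v.1 v.2 w‖ ≤ L * ‖w‖ := by
  obtain ⟨L, hL, hlip⟩ := ContDiff.exists_norm_sub_le_mul_norm_snd
    (f := fun p : (ℂ × ℂ) × ℂ => pkerRatioNumer m p.1.1 p.1.2 p.2)
    (by unfold pkerRatioNumer pkerDeriv pker; fun_prop) 1
  refine ⟨L, hL, fun v hv w hw => ?_⟩
  have hv' : ‖((v.1 : ℂ), (v.2 : ℂ))‖ ≤ 1 := by
    simpa [Prod.norm_def] using (mem_sphere_zero_iff_norm.mp hv).le
  simpa [pkerRatioNumer_zero] using hlip _ w hv' hw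

lemma exists_pker_bounds_near_sphere {m : ℕ} (hodd : Odd m) :
    ∃ c > 0, ∃ δ > 0, ∃ L ≥ 0, ∀ v ∈ sphere (0 : ℝ × ℝ) 1, ∀ w : ℂ, ‖w‖ ≤ δ →
      c ≤ ‖pker m v.1 v.2 w‖ ∧ ‖pkerRatioNumer m v.1 v.2 w‖ ≤ L * ‖w‖ := by
  obtain ⟨c, hc, δ, hδ, hlow⟩ := exists_pos_le_norm_pker_near_sphere hodd
  obtain ⟨L, hL, hnum⟩ := exists_norm_pkerRatioNumer_le m
  exact ⟨c, hc, min δ 1, by positivity, L, hL, fun v hv w hw =>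
    ⟨hlow v hv w (hw.trans (min_le_left _ _)), hnum v hv w (hw.trans (min_le_right _ _))⟩⟩

lemma div_norm_mem_sphere {x : ℝ × ℝ} (hx : x ≠ 0) :
    (x.1 / ‖x‖, x.2 / ‖x‖) ∈ sphere (0 : ℝ × ℝ) 1 := by
  rw [mem_sphere_zero_iff_norm, ← norm_smul_inv_norm (𝕜 := ℝ) hx]
  congr 1
  ext <;> simp [div_eq_inv_mul]

theorem pker_ratio_deriv_bound_general (m : ℕ) (hodd : Odd m) (r : ℝ) (hr : 0 < r) :
    ∃ a₀ > 0, ∀ a : ℝ, 0 < a → a ≤ a₀ → ∃ C : ℝ,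
      ∀ l μ : ℝ, 2 * r ≤ |l| → 2 * r ≤ |μ| →
        pker m (l : ℂ) (μ : ℂ) ((a : ℂ) * Complex.I) ≠ 0 ∧
        DifferentiableAt ℝ
          (fun t : ℝ => pker m (t : ℂ) (μ : ℂ) 0 /
            pker m (t : ℂ) (μ : ℂ) ((a : ℂ) * Complex.I)) l ∧
        ‖(deriv
          (fun t : ℝ => pker m (t : ℂ) (μ : ℂ) 0 /
            pker m (t : ℂ) (μ : ℂ) ((a : ℂ) * Complex.I)) l)‖ ≤
          C / (|l| + |μ|) ^ 2 := by
  obtain ⟨c, hc, δ, hδ, L, hL, hunit⟩ := exists_pker_bounds_near_sphere hodd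
  refine ⟨2 * r * δ, by positivity, fun a ha ha₀ => ⟨4 * L * a / c ^ 2, fun l μ hl hμ => ?_⟩⟩
  set s := ‖(l, μ)‖
  have hs : 2 * r ≤ s := hl.trans (le_max_left _ _)
  have hs0 : 0 < s := by linarith
  have hsC : (s : ℂ) ≠ 0 := Complex.ofReal_ne_zero.mpr hs0.ne'
  have hw : ‖(a : ℂ) * Complex.I / s‖ = a / s := by simp [abs_of_pos ha, abs_of_pos hs0]
  have haδ : a / s ≤ δ := by
    rw [div_le_iff₀ hs0]
    nlinarith
  obtain ⟨hE, hN⟩ := hunit _ (div_norm_mem_sphere (norm_pos_iff.mp hs0)) _ (hw ▸ haδ)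
  push_cast at hE hN
  rw [hw] at hN
  have hE0 := norm_pos_iff.mp (hc.trans_le hE)
  have hderiv := hasDerivAt_pker_ratio_ofReal hsC hE0
  refine ⟨by rw [pker_eq_pow_mul_pker_div m hsC]; exact mul_ne_zero (pow_ne_zero _ hsC) hE0,
    hderiv.differentiableAt, ?_⟩
  have hsum : |l| + |μ| ≤ 2 * s := by
    linarith [le_max_left |l| |μ|, le_max_right |l| |μ|, show s = max |l| |μ| from rfl]
  rw [hderiv.deriv, norm_div, norm_div, norm_pow, Complex.norm_real, Real.norm_of_nonneg hs0.le]
  calc _ ≤ L * (a / s) / c ^ 2 / s := by gcongr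
    _ = L * a / c ^ 2 * 4 / (2 * s) ^ 2 := by field_simp; ring
    _ ≤ L * a / c ^ 2 * 4 / (|l| + |μ|) ^ 2 := by
      gcongr
      exact pow_pos (by linarith [abs_nonneg μ]) 2
    _ = 4 * L * a / c ^ 2 / (|l| + |μ|) ^ 2 := by ring

/-- Estimate (3.25): for `m` odd and `a > 0` small, the λ-derivative of
`p(λ,μ;0)/p(λ,μ;ia)` is `O((|λ|+|μ|)^{-2})` in the region `|λ| ≥ 2r`, `|μ| ≥ 2r`. -/
theorem pker_ratio_deriv_bound (m : ℕ) (hm : 0 < m) (hodd : Odd m) (r : ℝ) (hr : 0 < r) :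
    ∃ a₀ > 0, ∀ a : ℝ, 0 < a → a ≤ a₀ → ∃ C : ℝ,
      ∀ l μ : ℝ, 2 * r ≤ |l| → 2 * r ≤ |μ| →
        pker m (l : ℂ) (μ : ℂ) ((a : ℂ) * Complex.I) ≠ 0 ∧
        DifferentiableAt ℝ
          (fun t : ℝ => pker m (t : ℂ) (μ : ℂ) 0 /
            pker m (t : ℂ) (μ : ℂ) ((a : ℂ) * Complex.I)) l ∧
        ‖(deriv
          (fun t : ℝ => pker m (t : ℂ) (μ : ℂ) 0 /
            pker m (t : ℂ) (μ : ℂ) ((a : ℂ) * Complex.I)) l)‖ ≤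
          C / (|l| + |μ|) ^ 2 :=
  pker_ratio_deriv_bound_general m hodd r hr
end

section
/- Let m be a positive integer, let a > 0 and r > 0. Define h(λ) = (λ - ia)^m / (λ^m - i) for real λ (well-defined since λ^m is real, so λ^m - i ≠ 0). Then there exists a constant C (depending on m, a, r) such that h is differentiable at every real λ with |λ| ≥ r and |h′(λ)| ≤ C·λ^{-2}. -/
/-!
By the quotient rule the derivative of `(t - c)^(m+1) / (t^(m+1) - i)` is
`(m+1) (t - c)^m (c t^m - i) / (t^(m+1) - i)^2`: the leading terms of the numerator cancel.
The numerator is therefore `O(|t|^(2m))`, while `|t^(m+1) - i| ≥ |t|^(m+1)` because `t^(m+1)` is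
its real part; this leaves a factor `|t|^(-2)`, uniformly for `|t| ≥ r > 0`.
-/

open Complex

lemma ofReal_pow_sub_I_ne_zero (t : ℝ) (m : ℕ) : (t : ℂ) ^ m - I ≠ 0 := by
  intro h
  simpa [← ofReal_pow] using congrArg im h

lemma abs_pow_le_norm_ofReal_pow_sub_I (t : ℝ) (m : ℕ) : |t| ^ m ≤ ‖(t : ℂ) ^ m - I‖ := by
  simpa [← ofReal_pow, abs_pow] using abs_re_le_norm ((t : ℂ) ^ m - I)

lemma hasDerivAt_sub_pow_div_pow_sub_I (c : ℂ) (m : ℕ) (t : ℝ) :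
    HasDerivAt (fun t : ℝ => ((t : ℂ) - c) ^ (m + 1) / ((t : ℂ) ^ (m + 1) - I))
      (((m : ℂ) + 1) * ((t : ℂ) - c) ^ m * (c * (t : ℂ) ^ m - I) /
        ((t : ℂ) ^ (m + 1) - I) ^ 2) t := by
  have hnum : HasDerivAt (fun t : ℝ => ((t : ℂ) - c) ^ (m + 1))
      (((m : ℂ) + 1) * ((t : ℂ) - c) ^ m) t := by
    simpa using (((hasDerivAt_id (t : ℂ)).sub_const c).pow (m + 1)).comp_ofReal
  have hden : HasDerivAt (fun t : ℝ => (t : ℂ) ^ (m + 1) - I) (((m : ℂ) + 1) * (t : ℂ) ^ m) t := by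
    simpa using ((hasDerivAt_pow (m + 1) (t : ℂ)).sub_const I).comp_ofReal
  exact (hnum.div hden (ofReal_pow_sub_I_ne_zero t (m + 1))).congr_deriv (by ring)

lemma norm_sub_pow_div_pow_sub_I_deriv_le (c : ℂ) (m : ℕ) {t : ℝ} (ht : t ≠ 0) :
    ‖((m : ℂ) + 1) * ((t : ℂ) - c) ^ m * (c * (t : ℂ) ^ m - I) / ((t : ℂ) ^ (m + 1) - I) ^ 2‖ ≤
      (m + 1) * (|t| + ‖c‖) ^ m * (‖c‖ * |t| ^ m + 1) / (|t| ^ (m + 1)) ^ 2 := by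
  have hfactor : ‖(t : ℂ) - c‖ ≤ |t| + ‖c‖ := by
    simpa using norm_sub_le (t : ℂ) c
  have hlinear : ‖c * (t : ℂ) ^ m - I‖ ≤ ‖c‖ * |t| ^ m + 1 := by
    simpa [← ofReal_pow, abs_pow] using norm_sub_le (c * (t : ℂ) ^ m) I
  rw [norm_div, norm_mul, norm_mul, norm_pow, norm_pow,
    show ((m : ℂ) + 1) = ((m + 1 : ℕ) : ℂ) by push_cast; rfl, norm_natCast]
  push_cast
  gcongr
  exact abs_pow_le_norm_ofReal_pow_sub_I t (m + 1)

lemma le_div_mul_of_le {r x : ℝ} (hr : 0 < r) (hx : r ≤ x) {b : ℝ} (hb : 0 ≤ b) :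
    b ≤ b / r * x :=
  calc b = b / r * r := (div_mul_cancel₀ b hr.ne').symm
    _ ≤ b / r * x := by gcongr

lemma add_pow_mul_div_pow_le {r x : ℝ} (hr : 0 < r) (hx : r ≤ x) {b : ℝ} (hb : 0 ≤ b) (m : ℕ) :
    (m + 1) * (x + b) ^ m * (b * x ^ m + 1) / (x ^ (m + 1)) ^ 2 ≤
      (m + 1) * ((1 + b / r) ^ m * (b + 1 / r ^ m)) / x ^ 2 := by
  have hx0 : 0 < x := hr.trans_le hx
  have hsum : x + b ≤ (1 + b / r) * x := by linarith [le_div_mul_of_le hr hx hb]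
  have hone : 1 ≤ 1 / r ^ m * x ^ m :=
    le_div_mul_of_le (pow_pos hr m) (pow_le_pow_left₀ hr.le hx m) zero_le_one
  have hlinear : b * x ^ m + 1 ≤ (b + 1 / r ^ m) * x ^ m := by linarith
  calc (m + 1) * (x + b) ^ m * (b * x ^ m + 1) / (x ^ (m + 1)) ^ 2
      ≤ (m + 1) * ((1 + b / r) * x) ^ m * ((b + 1 / r ^ m) * x ^ m) / (x ^ (m + 1)) ^ 2 := by
        gcongr
    _ = (m + 1) * ((1 + b / r) ^ m * (b + 1 / r ^ m)) / x ^ 2 := by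
        rw [mul_pow]
        field_simp
        ring

theorem ratio_deriv_bound_general (m : ℕ) (a : ℝ) (r : ℝ) (hr : 0 < r) :
    ∃ C : ℝ, ∀ l : ℝ, r ≤ |l| →
      DifferentiableAt ℝ
        (fun t : ℝ => ((t : ℂ) - (a : ℂ) * Complex.I) ^ m / ((t : ℂ) ^ m - Complex.I)) l ∧
      ‖(deriv
        (fun t : ℝ => ((t : ℂ) - (a : ℂ) * Complex.I) ^ m / ((t : ℂ) ^ m - Complex.I)) l)‖ ≤
        C / l ^ 2 := by
  cases m with
  | zero => exact ⟨0, fun l _ => by simp⟩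
  | succ k =>
    set c : ℂ := (a : ℂ) * I
    refine ⟨(k + 1) * ((1 + ‖c‖ / r) ^ k * (‖c‖ + 1 / r ^ k)), fun l hl => ?_⟩
    have hD := hasDerivAt_sub_pow_div_pow_sub_I c k l
    refine ⟨hD.differentiableAt, ?_⟩
    have hl0 : l ≠ 0 := abs_pos.mp (hr.trans_le hl)
    calc ‖deriv _ l‖ ≤ (k + 1) * (|l| + ‖c‖) ^ k * (‖c‖ * |l| ^ k + 1) / (|l| ^ (k + 1)) ^ 2 := by
          rw [hD.deriv]; exact norm_sub_pow_div_pow_sub_I_deriv_le c k hl0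
      _ ≤ _ / |l| ^ 2 := add_pow_mul_div_pow_le hr hl (norm_nonneg c) k
      _ = _ := by rw [sq_abs]

/-- First estimate on page 6: the derivative of `h(λ) = (λ-ia)^m/(λ^m - i)` satisfies
`|h′(λ)| ≤ C λ^{-2}` for `|λ| ≥ r`. -/
theorem ratio_deriv_bound (m : ℕ) (hm : 0 < m) (a : ℝ) (ha : 0 < a) (r : ℝ) (hr : 0 < r) :
    ∃ C : ℝ, ∀ l : ℝ, r ≤ |l| →
      DifferentiableAt ℝ
        (fun t : ℝ => ((t : ℂ) - (a : ℂ) * Complex.I) ^ m / ((t : ℂ) ^ m - Complex.I)) l ∧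
      ‖(deriv
        (fun t : ℝ => ((t : ℂ) - (a : ℂ) * Complex.I) ^ m / ((t : ℂ) ^ m - Complex.I)) l)‖ ≤
        C / l ^ 2 :=
  ratio_deriv_bound_general m a r hr
end

section
/- Let m be an odd positive integer and let 0 < r ≤ R. Then there exists a₀ > 0 such that for every real a ≥ a₀ there exists a constant C with the following properties, where G(λ,μ) = (λ - ia)^m (μ - ia)^m / p(λ,μ;ia): for all real λ, μ ∈ [-R, R], G(λ,μ) is well-defined with |G(λ,μ)| ≤ C, the function λ ↦ G(λ,μ) is differentiable at every λ ∈ (-R, R), and |∂G/∂λ (λ,μ)| ≤ C. -/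
/-!
Writing `λ - ia = -ia (1 + iλ/a)`, the kernel `p(λ,μ;ia)` is `(-ia)^(m-1)` times a sum of `m`
products `x^i y^j` (`i + j = m - 1`) with `x, y` within `1/(2m)` of `1` once `a ≥ 2m|R|`.
Each product is then within `exp((m-1)/(2m)) - 1 < 1` of `1`, so the sum cannot vanish. Hence
`G` is `C¹` on the open set where `p ≠ 0`, which contains the compact square, and both `G` and
its `λ`-derivative are bounded there.
-/

open Finset

lemma norm_pow_mul_pow_sub_one_le {R : Type*} [NormedCommRing R] [NormOneClass R]
    (x y : R) (i j : ℕ) :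
    ‖x ^ i * y ^ j - 1‖ ≤ Real.exp (i * ‖x - 1‖ + j * ‖y - 1‖) - 1 := by
  have := Finset.univ.norm_prod_one_add_sub_one_le
    (Sum.elim (fun _ : Fin i => x - 1) (fun _ : Fin j => y - 1))
  simpa [Fintype.prod_sum_type, Fintype.sum_sum_type] using this

lemma norm_pker_zero_sub_le {m : ℕ} {x y : ℂ} {δ : ℝ} (hx : ‖x - 1‖ ≤ δ) (hy : ‖y - 1‖ ≤ δ) :
    ‖pker m x y 0 - m‖ ≤ m * (Real.exp ((m - 1 : ℕ) * δ) - 1) := by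
  have hterm : ∀ j ∈ range m,
      ‖x ^ (m - 1 - j) * y ^ j - 1‖ ≤ Real.exp ((m - 1 : ℕ) * δ) - 1 := by
    intro j hj
    have hj : j ≤ m - 1 := Nat.le_sub_one_of_lt (mem_range.mp hj)
    refine (norm_pow_mul_pow_sub_one_le x y _ _).trans
      (sub_le_sub_right (Real.exp_monotone ?_) 1)
    calc ((m - 1 - j : ℕ) : ℝ) * ‖x - 1‖ + j * ‖y - 1‖
        ≤ (m - 1 - j : ℕ) * δ + j * δ := by gcongr
      _ = (m - 1 : ℕ) * δ := by rw [← add_mul, ← Nat.cast_add, Nat.sub_add_cancel hj]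
  calc ‖pker m x y 0 - m‖ = ‖∑ j ∈ range m, (x ^ (m - 1 - j) * y ^ j - 1)‖ := by
        simp [pker, sum_sub_distrib]
    _ ≤ ∑ j ∈ range m, (Real.exp ((m - 1 : ℕ) * δ) - 1) := norm_sum_le_of_le _ hterm
    _ = m * (Real.exp ((m - 1 : ℕ) * δ) - 1) := by simp [mul_sub]

lemma pker_zero_ne_zero {m : ℕ} (hm : 0 < m) {x y : ℂ} {δ : ℝ} (hx : ‖x - 1‖ ≤ δ)
    (hy : ‖y - 1‖ ≤ δ) (hδ : 2 * m * δ ≤ 1) : pker m x y 0 ≠ 0 := by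
  have hδ0 : 0 ≤ δ := (norm_nonneg _).trans hx
  have hm1 : (1 : ℝ) ≤ m := by exact_mod_cast hm
  set t : ℝ := (m - 1 : ℕ) * δ
  have ht : 2 * t < 1 := by
    simp only [t, Nat.cast_sub hm, Nat.cast_one]
    nlinarith
  have ht0 : 0 ≤ t := by positivity
  have hexp : Real.exp t - 1 < 1 := by
    have := Real.abs_exp_sub_one_le (x := t) (by rw [abs_of_nonneg ht0]; linarith)
    rw [abs_of_nonneg ht0] at this
    linarith [le_abs_self (Real.exp t - 1)]
  intro h0
  have := norm_pker_zero_sub_le (m := m) hx hy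
  rw [h0, zero_sub, norm_neg, Complex.norm_natCast] at this
  nlinarith

lemma pker_eq_pow_mul_pker_zero (m : ℕ) (l μ z : ℂ) {w : ℂ} (hw : w ≠ 0) :
    pker m l μ z = w ^ (m - 1) * pker m ((l - z) / w) ((μ - z) / w) 0 := by
  simp only [pker, sub_zero, mul_sum]
  refine sum_congr rfl fun j hj => ?_
  rw [div_pow, div_pow, ← pow_sub_mul_pow w (Nat.le_sub_one_of_lt (mem_range.mp hj))]
  field_simp

lemma pker_ne_zero {m : ℕ} (hm : 0 < m) {l μ z w : ℂ} {δ : ℝ} (hw : w ≠ 0)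
    (hl : ‖l - z - w‖ ≤ δ * ‖w‖) (hμ : ‖μ - z - w‖ ≤ δ * ‖w‖) (hδ : 2 * m * δ ≤ 1) :
    pker m l μ z ≠ 0 := by
  have hw' : 0 < ‖w‖ := norm_pos_iff.mpr hw
  have key : ∀ u : ℂ, ‖u - z - w‖ ≤ δ * ‖w‖ → ‖(u - z) / w - 1‖ ≤ δ := by
    intro u hu
    rwa [div_sub_one hw, norm_div, div_le_iff₀ hw']
  rw [pker_eq_pow_mul_pker_zero m l μ z hw]
  exact mul_ne_zero (pow_ne_zero _ hw) (pker_zero_ne_zero hm (key l hl) (key μ hμ) hδ)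

lemma IsCompact.exists_bound_norm_and_deriv_fst {E : Type*} [NormedAddCommGroup E]
    [NormedSpace ℝ E] {F : ℝ × ℝ → E} {U K : Set (ℝ × ℝ)} (hU : IsOpen U)
    (hF : ContDiffOn ℝ 1 F U) (hK : IsCompact K) (hKU : K ⊆ U) :
    ∃ C, ∀ q ∈ K, ‖F q‖ ≤ C ∧ ‖deriv (fun s => F (s, q.2)) q.1‖ ≤ C := by
  obtain ⟨C₁, hC₁⟩ := hK.exists_bound_of_continuousOn (hF.continuousOn.mono hKU)
  obtain ⟨C₂, hC₂⟩ := hK.exists_bound_of_continuousOn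
    ((hF.continuousOn_fderiv_of_isOpen hU le_rfl).mono hKU)
  refine ⟨max C₁ C₂, fun q hq => ⟨(hC₁ q hq).trans (le_max_left _ _), ?_⟩⟩
  have hFq : HasFDerivAt F (fderiv ℝ F q) q :=
    ((hF.contDiffAt (hU.mem_nhds (hKU hq))).differentiableAt one_ne_zero).hasFDerivAt
  have hslice : HasDerivAt (fun s => F (s, q.2)) (fderiv ℝ F q (1, 0)) q.1 :=
    hFq.comp_hasDerivAt q.1 ((hasDerivAt_id q.1).prodMk (hasDerivAt_const q.1 q.2))
  calc ‖deriv (fun s => F (s, q.2)) q.1‖ = ‖fderiv ℝ F q (1, 0)‖ := by rw [hslice.deriv]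
    _ ≤ ‖fderiv ℝ F q‖ * ‖((1 : ℝ), (0 : ℝ))‖ := (fderiv ℝ F q).le_opNorm _
    _ ≤ max C₁ C₂ := by simpa using (hC₂ q hq).trans (le_max_right _ _)

lemma contDiff_pker_ofReal (m : ℕ) (z : ℂ) :
    ContDiff ℝ 1 (fun q : ℝ × ℝ => pker m q.1 q.2 z) := by
  have : ContDiff ℝ 1 (fun t : ℝ => (t : ℂ)) := Complex.ofRealCLM.contDiff
  exact ContDiff.sum fun j _ => by fun_prop

lemma contDiffOn_pow_mul_pow_div_pker (m : ℕ) (z : ℂ) :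
    ContDiffOn ℝ 1
      (fun q : ℝ × ℝ => ((q.1 : ℂ) - z) ^ m * ((q.2 : ℂ) - z) ^ m / pker m q.1 q.2 z)
      {q | pker m q.1 q.2 z ≠ 0} := by
  have : ContDiff ℝ 1 (fun t : ℝ => (t : ℂ)) := Complex.ofRealCLM.contDiff
  simp_rw [div_eq_mul_inv]
  exact (by fun_prop : ContDiff ℝ 1 fun q : ℝ × ℝ => ((q.1 : ℂ) - z) ^ m * ((q.2 : ℂ) - z) ^ m)
    |>.contDiffOn.mul ((contDiff_pker_ofReal m z).contDiffOn.inv fun _ hq => hq)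

lemma pker_ofReal_mul_I_ne_zero {m : ℕ} (hm : 0 < m) {a : ℝ} (ha : 0 < a) {l μ : ℝ}
    (hl : 2 * m * |l| ≤ a) (hμ : 2 * m * |μ| ≤ a) :
    pker m (l : ℂ) (μ : ℂ) ((a : ℂ) * Complex.I) ≠ 0 := by
  have hm' : (0 : ℝ) < m := by exact_mod_cast hm
  have hw : ‖-((a : ℂ) * Complex.I)‖ = a := by simp [abs_of_pos ha]
  have hclose : ∀ t : ℝ, 2 * m * |t| ≤ a →
      ‖(t : ℂ) - a * Complex.I - -(a * Complex.I)‖ ≤ 1 / (2 * m) * ‖-((a : ℂ) * Complex.I)‖ := by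
    intro t ht
    rw [hw, one_div_mul_eq_div, le_div_iff₀ (by positivity)]
    simpa [mul_comm] using ht
  exact pker_ne_zero hm (by simp [ha.ne']) (hclose l hl) (hclose μ hμ)
    (mul_one_div_cancel (by positivity)).le

theorem G_bounded_on_square_general (m : ℕ) (hm : 0 < m) (R : ℝ) :
    ∃ a₀ > 0, ∀ a : ℝ, a₀ ≤ a → ∃ C : ℝ,
      (∀ l μ : ℝ, |l| ≤ R → |μ| ≤ R →
        pker m (l : ℂ) (μ : ℂ) ((a : ℂ) * Complex.I) ≠ 0 ∧
        ‖((l : ℂ) - (a : ℂ) * Complex.I) ^ m *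
            ((μ : ℂ) - (a : ℂ) * Complex.I) ^ m /
            pker m (l : ℂ) (μ : ℂ) ((a : ℂ) * Complex.I)‖ ≤ C) ∧
      (∀ l μ : ℝ, -R < l → l < R → |μ| ≤ R →
        DifferentiableAt ℝ
          (fun t : ℝ => ((t : ℂ) - (a : ℂ) * Complex.I) ^ m *
            ((μ : ℂ) - (a : ℂ) * Complex.I) ^ m /
            pker m (t : ℂ) (μ : ℂ) ((a : ℂ) * Complex.I)) l ∧
        ‖deriv
          (fun t : ℝ => ((t : ℂ) - (a : ℂ) * Complex.I) ^ m *
            ((μ : ℂ) - (a : ℂ) * Complex.I) ^ m /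
            pker m (t : ℂ) (μ : ℂ) ((a : ℂ) * Complex.I)) l‖ ≤ C) := by
  refine ⟨2 * m * |R| + 1, by positivity, fun a ha => ?_⟩
  have ha0 : 0 < a := by linarith [show 0 ≤ 2 * m * |R| by positivity]
  set z : ℂ := a * Complex.I
  have hsmall : ∀ t : ℝ, |t| ≤ R → 2 * m * |t| ≤ a := fun t ht => by
    nlinarith [ht.trans (le_abs_self R), show (0 : ℝ) ≤ m by positivity]
  have hp : ∀ l μ : ℝ, |l| ≤ R → |μ| ≤ R → pker m l μ z ≠ 0 := fun l μ hl hμ =>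
    pker_ofReal_mul_I_ne_zero hm ha0 (hsmall l hl) (hsmall μ hμ)
  set U : Set (ℝ × ℝ) := {q | pker m q.1 q.2 z ≠ 0}
  have hU : IsOpen U := isOpen_ne_fun (contDiff_pker_ofReal m z).continuous continuous_const
  have hF := contDiffOn_pow_mul_pow_div_pker m z
  have hmem : ∀ l μ : ℝ, |l| ≤ R → |μ| ≤ R → (l, μ) ∈ Metric.closedBall (0 : ℝ × ℝ) R :=
    fun l μ hl hμ => by simpa using ⟨hl, hμ⟩
  have hKU : Metric.closedBall (0 : ℝ × ℝ) R ⊆ U := fun q hq => by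
    simp only [mem_closedBall_zero_iff, Prod.norm_def, max_le_iff, Real.norm_eq_abs] at hq
    exact hp q.1 q.2 hq.1 hq.2
  obtain ⟨C, hC⟩ :=
    (isCompact_closedBall (0 : ℝ × ℝ) R).exists_bound_norm_and_deriv_fst hU hF hKU
  refine ⟨C, fun l μ hl hμ => ⟨hp l μ hl hμ, (hC _ (hmem l μ hl hμ)).1⟩,
    fun l μ hl₁ hl₂ hμ => ?_⟩
  have hlμ := hmem l μ (abs_le.2 ⟨hl₁.le, hl₂.le⟩) hμ
  refine ⟨?_, (hC _ hlμ).2⟩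
  exact ((hF.contDiffAt (hU.mem_nhds (hKU hlμ))).differentiableAt one_ne_zero).comp l
    (by fun_prop : DifferentiableAt ℝ (fun t : ℝ => (t, μ)) l)

/-- Boundedness of `G(λ,μ) = (λ-ia)^m (μ-ia)^m / p(λ,μ;ia)` and of its λ-derivative on
the square `|λ| ≤ R`, `|μ| ≤ R`, for `m` odd and `a` sufficiently large. -/
theorem G_bounded_on_square (m : ℕ) (hm : 0 < m) (hodd : Odd m)
    (r R : ℝ) (hr : 0 < r) (hrR : r ≤ R) :
    ∃ a₀ > 0, ∀ a : ℝ, a₀ ≤ a → ∃ C : ℝ,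
      (∀ l μ : ℝ, |l| ≤ R → |μ| ≤ R →
        pker m (l : ℂ) (μ : ℂ) ((a : ℂ) * Complex.I) ≠ 0 ∧
        ‖((l : ℂ) - (a : ℂ) * Complex.I) ^ m *
            ((μ : ℂ) - (a : ℂ) * Complex.I) ^ m /
            pker m (l : ℂ) (μ : ℂ) ((a : ℂ) * Complex.I)‖ ≤ C) ∧
      (∀ l μ : ℝ, -R < l → l < R → |μ| ≤ R →
        DifferentiableAt ℝ
          (fun t : ℝ => ((t : ℂ) - (a : ℂ) * Complex.I) ^ m *
            ((μ : ℂ) - (a : ℂ) * Complex.I) ^ m /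
            pker m (t : ℂ) (μ : ℂ) ((a : ℂ) * Complex.I)) l ∧
        ‖deriv
          (fun t : ℝ => ((t : ℂ) - (a : ℂ) * Complex.I) ^ m *
            ((μ : ℂ) - (a : ℂ) * Complex.I) ^ m /
            pker m (t : ℂ) (μ : ℂ) ((a : ℂ) * Complex.I)) l‖ ≤ C) :=
  G_bounded_on_square_general m hm R
end
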